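/- Let n be a positive integer and t >= 0 with n >= 2t+1. Then every colouring f of H_n with t_f = t satisfies winst(f) >= floor(t/(n-2t)) + ceil(t/(n-2t)) + 1; that is, winst(n,t) >= floor(t/(n-2t)) + ceil(t/(n-2t)) + 1. -/

import Mathlib

open Finset

/-- The number of entries of a point of the hypercube equal to `1` (`true`). -/
def onesCount {n : ℕ} (x : Fin n → Bool) : ℕ :=
  (univ.filter fun i => x i = true).card

/-- The number of entries of a point of the hypercube equal to `0` (`false`). -/
def zerosCount {n : ℕ} (x : Fin n → Bool) : ℕ :=
  (univ.filter fun i => x i = false).card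

/-- `P` is a geodesic in the `n`-hypercube: consecutive points differ in exactly one
entry, and each of the `n` entries changes at exactly one step. -/
def IsGeodesic {n : ℕ} (P : Fin (n+1) → Fin n → Bool) : Prop :=
  ∃ σ : Equiv.Perm (Fin n), ∀ j : Fin n, ∀ ℓ : Fin n,
    P j.succ ℓ = if σ ℓ = j then !(P j.castSucc ℓ) else P j.castSucc ℓ

/-- The number of jumps of the geodesic `P` in the colouring `f`. -/
def jumps {n : ℕ} (f : (Fin n → Bool) → Bool) (P : Fin (n+1) → Fin n → Bool) : ℕ :=
  (univ.filter fun j : Fin n => f (P j.succ) ≠ f (P j.castSucc)).card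

/-- `inst f` is the maximum of `jumps f P` over all geodesics `P`. -/
noncomputable def inst {n : ℕ} (f : (Fin n → Bool) → Bool) : ℕ :=
  sSup {m | ∃ P : Fin (n+1) → Fin n → Bool, IsGeodesic P ∧ m = jumps f P}

/-- `f` respects the balls `B_t(0^n)` and `B_t(1^n)`: it is `0` on all points with at
most `t` ones and `1` on all points with at most `t` zeros. -/
def Respects {n : ℕ} (t : ℕ) (f : (Fin n → Bool) → Bool) : Prop :=
  (∀ x, onesCount x ≤ t → f x = false) ∧ (∀ x, zerosCount x ≤ t → f x = true)

/-- `t_f = t`: `t` is the largest radius whose balls `f` respects. -/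
def tfEq {n : ℕ} (f : (Fin n → Bool) → Bool) (t : ℕ) : Prop :=
  Respects t f ∧ ¬ Respects (t+1) f

/-- `winst t f`: the maximum number of jumps of `f` over all well-ending
`(t+1)`-geodesics (those starting with exactly `t+1` ones, whose first point has
colour `1` or whose last point has colour `0`). -/
noncomputable def winst {n : ℕ} (t : ℕ) (f : (Fin n → Bool) → Bool) : ℕ :=
  sSup {m | ∃ P : Fin (n+1) → Fin n → Bool, IsGeodesic P ∧ onesCount (P 0) = t + 1 ∧
    (f (P 0) = true ∨ f (P (Fin.last n)) = false) ∧ m = jumps f P}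

/-!
Put `d = n - 2t`. Since `t_f = t`, points with at most `t` ones have colour `0` and points with
at least `t + d` ones (at most `t` zeros) have colour `1`, while some point on the boundary
`t + 1` of one of the two balls is coloured "wrongly". If it is a point `z` with `t + 1` ones and
colour `1`, run a geodesic from `z` that first removes a one (colour `0`) and then alternately
adds `d` ones and removes `d` ones, so that the number of ones zig-zags between `t + d` and `t`
and every block of `d` steps changes the colour. The `t + d - 1` zeros and `t + 1` ones of `z`
suffice for `⌈t/d⌉` blocks of the first kind and `⌊t/d⌋` of the second, which gives
`⌊t/d⌋ + ⌈t/d⌉ + 1` jumps. A wrong point with `t + 1` zeros and colour `0` is handled by the same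
construction for the dual colouring `y ↦ ¬ f (¬ y)`, read backwards and complemented.
-/

def countTrue (u : ℕ → Bool) (j : ℕ) : ℕ := ∑ m ∈ range j, (u m).toNat

lemma countTrue_add_of_forall_eq {u : ℕ → Bool} {a k : ℕ} {v : Bool}
    (h : ∀ i < k, u (a + i) = v) : countTrue u (a + k) = countTrue u a + k * v.toNat := by
  have hblock : ∑ i ∈ range k, (u (a + i)).toNat = ∑ _i ∈ range k, v.toNat :=
    sum_congr rfl fun i hi => by rw [h i (mem_range.1 hi)]
  rw [countTrue, sum_range_add, hblock, sum_const, card_range, smul_eq_mul, countTrue]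

def changes (G : ℕ → Bool) (b : ℕ) : ℕ := #{j ∈ range b | G (j + 1) ≠ G j}

lemma changes_mono (G : ℕ → Bool) : Monotone (changes G) := fun _ _ hab =>
  card_le_card (filter_subset_filter _ (range_mono hab))

lemma changes_lt_of_ne {G : ℕ → Bool} {a b : ℕ} (hab : a ≤ b) (hG : G a ≠ G b) :
    changes G a < changes G b := by
  induction b, hab using Nat.le_induction with
  | base => exact absurd rfl hG
  | succ b hab ih =>
    by_cases h : G (b + 1) = G b
    · exact (ih (h ▸ hG)).trans_le (changes_mono G b.le_succ)
    · have hstep : changes G (b + 1) = changes G b + 1 := by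
        rw [changes, changes, range_add_one, filter_insert, if_pos h,
          card_insert_of_notMem (by simp)]
      exact hstep ▸ Nat.lt_succ_of_le (changes_mono G hab)

lemma changes_reflect (G : ℕ → Bool) (n : ℕ) : changes (fun j => G (n - j)) n = changes G n := by
  simp only [changes, card_filter]
  rw [← sum_range_reflect]
  refine sum_congr rfl fun j hj => ?_
  have hj := mem_range.1 hj
  simp only [show n - (n - 1 - j + 1) = j by omega, show n - (n - 1 - j) = j + 1 by omega, ne_comm]

section Hypercube

variable {n : ℕ}

lemma onesCount_eq_sum (y : Fin n → Bool) : onesCount y = ∑ ℓ, (y ℓ).toNat := by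
  rw [onesCount, card_filter]
  exact sum_congr rfl fun ℓ _ => by cases y ℓ <;> rfl

lemma onesCount_add_zerosCount (y : Fin n → Bool) : onesCount y + zerosCount y = n := by
  simpa [onesCount, zerosCount] using
    card_filter_add_card_filter_not (s := (univ : Finset (Fin n))) fun i => y i = true

lemma onesCount_not (y : Fin n → Bool) : onesCount (fun ℓ => !y ℓ) = zerosCount y := by
  simp [onesCount, zerosCount]

lemma zerosCount_not (y : Fin n → Bool) : zerosCount (fun ℓ => !y ℓ) = onesCount y := by
  simp [onesCount, zerosCount]

lemma exists_perm_comp_eq {α : Type*} [Fintype α] (x y : α → Bool)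
    (h : #{a | x a = true} = #{a | y a = true}) : ∃ σ : Equiv.Perm α, ∀ a, y (σ a) = x a := by
  have hfiber : ∀ c, Fintype.card {a // x a = c} = Fintype.card {a // y a = c} := by
    rintro (_ | _)
    · simp_rw [← Bool.not_eq_true, Fintype.card_subtype_compl, Fintype.card_subtype, h]
    · simpa [Fintype.card_subtype] using h
  exact ⟨.ofFiberEquiv fun c => Fintype.equivOfCardEq (hfiber c), Equiv.ofFiberEquiv_map _⟩

def geodesicOf (x : Fin n → Bool) (σ : Equiv.Perm (Fin n)) (j : ℕ) : Fin n → Bool :=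
  fun ℓ => if (σ ℓ : ℕ) < j then !x ℓ else x ℓ

lemma isGeodesic_geodesicOf (x : Fin n → Bool) (σ : Equiv.Perm (Fin n)) :
    IsGeodesic fun j : Fin (n + 1) => geodesicOf x σ j := by
  refine ⟨σ, fun j ℓ => ?_⟩
  simp only [geodesicOf, Fin.val_succ, Fin.val_castSucc, ← Fin.val_inj]
  by_cases h : (σ ℓ : ℕ) = j
  · simp [h]
  · by_cases h' : (σ ℓ : ℕ) < j <;> simp [h, h'] <;> omega

@[simp]
lemma geodesicOf_zero (x : Fin n → Bool) (σ : Equiv.Perm (Fin n)) : geodesicOf x σ 0 = x := by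
  funext ℓ
  simp [geodesicOf]

@[simp]
lemma geodesicOf_self (x : Fin n → Bool) (σ : Equiv.Perm (Fin n)) :
    geodesicOf x σ n = fun ℓ => !x ℓ := by
  funext ℓ
  simp [geodesicOf]

lemma geodesicOf_revPerm (x : Fin n → Bool) (σ : Equiv.Perm (Fin n)) (j : ℕ) :
    geodesicOf x (σ.trans Fin.revPerm) j = fun ℓ => !geodesicOf x σ (n - j) ℓ := by
  funext ℓ
  have := (σ ℓ).isLt
  by_cases h : (σ ℓ : ℕ) < n - j
  · simp [geodesicOf, h, show ¬ n - (σ ℓ + 1) < j by omega]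
  · simp [geodesicOf, h, show n - (σ ℓ + 1) < j by omega]

lemma jumps_geodesicOf (f : (Fin n → Bool) → Bool) (x : Fin n → Bool) (σ : Equiv.Perm (Fin n)) :
    jumps f (fun j : Fin (n + 1) => geodesicOf x σ j)
      = changes (fun j => f (geodesicOf x σ j)) n := by
  simp only [jumps, changes, card_filter, Fin.val_succ, Fin.val_castSucc]
  exact Fin.sum_univ_eq_sum_range (fun j => if f (geodesicOf x σ (j + 1)) ≠ f (geodesicOf x σ j)
    then 1 else 0) n

lemma onesCount_geodesicOf {x : Fin n → Bool} {σ : Equiv.Perm (Fin n)} {u : ℕ → Bool}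
    (hxu : ∀ ℓ, u (σ ℓ) = x ℓ) {j : ℕ} (hj : j ≤ n) :
    onesCount (geodesicOf x σ j) + 2 * countTrue u j = j + onesCount x := by
  have hcoord : ∀ ℓ, (geodesicOf x σ j ℓ).toNat
      + 2 * (if (σ ℓ : ℕ) < j then (u (σ ℓ)).toNat else 0)
      = (if (σ ℓ : ℕ) < j then 1 else 0) + (x ℓ).toNat := by
    intro ℓ
    simp only [geodesicOf, ← hxu]
    split_ifs <;> cases u (σ ℓ) <;> rfl
  have hreindex : ∀ g : ℕ → ℕ,
      ∑ ℓ, (if (σ ℓ : ℕ) < j then g (σ ℓ) else 0) = ∑ m ∈ range j, g m := fun g => by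
    rw [Equiv.sum_comp σ (fun m : Fin n => if (m : ℕ) < j then g m else 0),
      Fin.sum_univ_eq_sum_range (fun m => if m < j then g m else 0), ← sum_filter]
    congr 1
    ext m
    simp only [mem_filter, mem_range]
    omega
  have hsum := sum_congr rfl fun ℓ (_ : ℓ ∈ univ) => hcoord ℓ
  rw [sum_add_distrib, sum_add_distrib, ← mul_sum, ← onesCount_eq_sum, ← onesCount_eq_sum,
    hreindex fun m => (u m).toNat, hreindex fun _ => 1] at hsum
  simpa [countTrue] using hsum

end Hypercube

/-- `zigzagSchedule d N r m` is the initial value of the coordinate flipped at step `m`, so that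
`true` means the step removes a one: step `0` removes a one, the next `N` blocks of `d` steps
alternately add and remove ones, then `r` more ones are removed and the remaining steps add ones. -/
def zigzagSchedule (d N r : ℕ) (m : ℕ) : Bool :=
  if m = 0 then true else if m ≤ N * d then (m - 1) / d % 2 = 1 else m ≤ N * d + r

section Zigzag

variable {d N r : ℕ}

lemma countTrue_zigzagSchedule (hd : 0 < d) {s : ℕ} (hs : s ≤ N) :
    countTrue (zigzagSchedule d N r) (1 + s * d) = 1 + d * (s / 2) := by
  induction s with
  | zero => simp [countTrue, zigzagSchedule]
  | succ s ih =>
    have hblock : ∀ i < d, zigzagSchedule d N r (1 + s * d + i) = decide (s % 2 = 1) := by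
      intro i hi
      have hle : s * d + d ≤ N * d := by nlinarith
      have hdiv : (s * d + i) / d = s := by
        rw [Nat.add_comm, Nat.add_mul_div_right _ _ hd, Nat.div_eq_of_lt hi, zero_add]
      simp [zigzagSchedule, show 1 + s * d + i - 1 = s * d + i by omega, hdiv,
        show 1 + s * d + i ≤ N * d by omega]
    rw [show 1 + (s + 1) * d = 1 + s * d + d by ring, countTrue_add_of_forall_eq hblock,
      ih (by omega), show (s + 1) / 2 = s / 2 + s % 2 by omega, mul_add]
    rcases Nat.mod_two_eq_zero_or_one s with h | h <;> simp [h]; ring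

lemma countTrue_zigzagSchedule_of_lt (hd : 0 < d) {L : ℕ} (hL : N * d + r < L) :
    countTrue (zigzagSchedule d N r) L = 1 + d * (N / 2) + r := by
  have hup : ∀ i < r, zigzagSchedule d N r (1 + N * d + i) = true := fun i hi => by
    simp [zigzagSchedule, show ¬ 1 + N * d + i ≤ N * d by omega]
    omega
  have hdown : ∀ i < L - (1 + N * d + r), zigzagSchedule d N r (1 + N * d + r + i) = false :=
    fun i _ => by simp [zigzagSchedule, show ¬ 1 + N * d + r + i ≤ N * d by omega]; omega
  rw [show L = 1 + N * d + r + (L - (1 + N * d + r)) by omega, countTrue_add_of_forall_eq hdown,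
    countTrue_add_of_forall_eq hup, countTrue_zigzagSchedule hd le_rfl]
  simp

end Zigzag

section Colouring

variable {n t d p q : ℕ}

lemma exists_geodesicOf_onesCount_zigzag (hd : 0 < d) (hn : 2 * t + d = n)
    (hpq : q ≤ p ∧ p ≤ q + 1) (hq : d * q ≤ t) (hp : d * p < t + d)
    {x : Fin n → Bool} (hx : onesCount x = t + 1) :
    ∃ σ : Equiv.Perm (Fin n), ∀ s ≤ p + q,
      onesCount (geodesicOf x σ (1 + s * d)) = t + d * (s % 2) := by
  set u := zigzagSchedule d (p + q) (t - d * q)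
  have hhalf : (p + q) / 2 = q := by omega
  have hlen : (p + q) * d + (t - d * q) < n := by
    rw [add_mul, mul_comm p, mul_comm q]
    omega
  have htotal : onesCount (fun m : Fin n => u m) = onesCount x := by
    rw [onesCount_eq_sum, Fin.sum_univ_eq_sum_range (fun m => (u m).toNat),
      ← countTrue, countTrue_zigzagSchedule_of_lt hd hlen, hhalf, hx]
    omega
  obtain ⟨σ, hσ⟩ := exists_perm_comp_eq x (fun m : Fin n => u m) htotal.symm
  refine ⟨σ, fun s hs => ?_⟩
  have hprofile := onesCount_geodesicOf hσ (j := 1 + s * d) (by nlinarith)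
  rw [countTrue_zigzagSchedule hd hs, hx] at hprofile
  have hsd : s * d = 2 * (d * (s / 2)) + d * (s % 2) := by
    nth_rw 1 [← Nat.div_add_mod s 2]
    ring
  omega

variable {f : (Fin n → Bool) → Bool}

lemma exists_geodesicOf_le_changes (hresp : Respects t f) (hd : 0 < d) (hn : 2 * t + d = n)
    (hpq : q ≤ p ∧ p ≤ q + 1) (hq : d * q ≤ t) (hp : d * p < t + d)
    {x : Fin n → Bool} (hx : onesCount x = t + 1) (hfx : f x = true) :
    ∃ σ : Equiv.Perm (Fin n), p + q + 1 ≤ changes (fun j => f (geodesicOf x σ j)) n := by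
  obtain ⟨σ, hσ⟩ := exists_geodesicOf_onesCount_zigzag hd hn hpq hq hp hx
  set G := fun j => f (geodesicOf x σ j)
  have hcolour : ∀ s ≤ p + q, G (1 + s * d) = decide (s % 2 = 1) := by
    intro s hs
    have hones := hσ s hs
    have hzeros := onesCount_add_zerosCount (geodesicOf x σ (1 + s * d))
    rcases Nat.mod_two_eq_zero_or_one s with h | h
    · rw [h, mul_zero, add_zero] at hones
      simpa [G, h] using hresp.1 _ hones.le
    · rw [h, mul_one] at hones
      simpa [G, h] using hresp.2 _ (by omega)
  have hchanges : ∀ s ≤ p + q, s + 1 ≤ changes G (1 + s * d) := by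
    intro s hs
    induction s with
    | zero =>
      have hne : G 0 ≠ G 1 := by simpa [G, hfx] using hcolour 0 hs
      simpa [changes] using changes_lt_of_ne zero_le_one hne
    | succ s ih =>
      have hne : G (1 + s * d) ≠ G (1 + (s + 1) * d) := by
        rw [hcolour s (by omega), hcolour (s + 1) hs]
        simp
        omega
      have := changes_lt_of_ne (by nlinarith) hne
      have := ih (by omega)
      omega
  exact ⟨σ, (hchanges _ le_rfl).trans (changes_mono G (by nlinarith))⟩

end Colouring

section Duality

variable {n t : ℕ} {f : (Fin n → Bool) → Bool}

def dualColouring (f : (Fin n → Bool) → Bool) (y : Fin n → Bool) : Bool := !f fun ℓ => !y ℓ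

lemma Respects.dual (h : Respects t f) : Respects t (dualColouring f) :=
  ⟨fun y hy => by simp [dualColouring, h.2 (fun ℓ => !y ℓ) (by rwa [zerosCount_not])],
    fun y hy => by simp [dualColouring, h.1 (fun ℓ => !y ℓ) (by rwa [onesCount_not])]⟩

lemma changes_geodesicOf_revPerm (x : Fin n → Bool) (σ : Equiv.Perm (Fin n)) :
    changes (fun j => f (geodesicOf x (σ.trans Fin.revPerm) j)) n
      = changes (fun j => dualColouring f (geodesicOf x σ j)) n := by
  rw [← changes_reflect (fun j => dualColouring f (geodesicOf x σ j))]
  simp [changes, geodesicOf_revPerm, dualColouring]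

end Duality

section Winst

variable {n t : ℕ} {f : (Fin n → Bool) → Bool}

lemma exists_boundary_of_not_respects (h : Respects t f) (h' : ¬ Respects (t + 1) f) :
    (∃ z, onesCount z = t + 1 ∧ f z = true) ∨ (∃ z, zerosCount z = t + 1 ∧ f z = false) := by
  simp only [Respects, not_and_or, not_forall, Bool.not_eq_false, Bool.not_eq_true] at h'
  rcases h' with ⟨z, hz, hfz⟩ | ⟨z, hz, hfz⟩
  · refine .inl ⟨z, le_antisymm hz ?_, hfz⟩
    by_contra hlt
    simp [h.1 z (by omega)] at hfz
  · refine .inr ⟨z, le_antisymm hz ?_, hfz⟩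
    by_contra hlt
    simp [h.2 z (by omega)] at hfz

lemma jumps_le_winst {P : Fin (n + 1) → Fin n → Bool} (hP : IsGeodesic P)
    (h0 : onesCount (P 0) = t + 1) (hend : f (P 0) = true ∨ f (P (Fin.last n)) = false) :
    jumps f P ≤ winst t f :=
  le_csSup ⟨n, by rintro _ ⟨P, -, -, -, rfl⟩; exact (card_filter_le _ _).trans (by simp)⟩
    ⟨P, hP, h0, hend, rfl⟩

end Winst

theorem zigzag_winst_general (n t : ℕ) (hvalid : 2 * t + 1 ≤ n)
    (f : (Fin n → Bool) → Bool) (hf : tfEq f t) :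
    t / (n - 2 * t) + (t + (n - 2 * t) - 1) / (n - 2 * t) + 1 ≤ winst t f := by
  obtain ⟨hresp, hnot⟩ := hf
  set d := n - 2 * t
  have hd : 0 < d := by omega
  have hq : d * (t / d) ≤ t := Nat.mul_div_le t d
  have hp : d * ((t + d - 1) / d) < t + d := (Nat.mul_div_le _ d).trans_lt (by omega)
  have hpq : t / d ≤ (t + d - 1) / d ∧ (t + d - 1) / d ≤ t / d + 1 :=
    ⟨Nat.div_le_div_right (by omega),
      (Nat.div_le_div_right (by omega)).trans_eq (Nat.add_div_right t hd)⟩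
  rw [add_comm (t / d)]
  rcases exists_boundary_of_not_respects hresp hnot with ⟨z, hz, hfz⟩ | ⟨z, hz, hfz⟩
  · obtain ⟨σ, hσ⟩ := exists_geodesicOf_le_changes hresp hd (by omega) hpq hq hp hz hfz
    rw [← jumps_geodesicOf] at hσ
    exact hσ.trans (jumps_le_winst (isGeodesic_geodesicOf z σ) (by simpa) (.inl (by simpa)))
  · obtain ⟨σ, hσ⟩ := exists_geodesicOf_le_changes hresp.dual hd (by omega) hpq hq hp
      (x := fun ℓ => !z ℓ) (by rwa [onesCount_not]) (by simpa [dualColouring])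
    rw [← changes_geodesicOf_revPerm, ← jumps_geodesicOf] at hσ
    refine hσ.trans (jumps_le_winst (isGeodesic_geodesicOf _ _) (by simpa [onesCount_not])
      (.inr ?_))
    simp [hfz]

/-- The zig-zag bound (a): for `n ≥ 2t+1`, every colouring `f` of `H_n` with `t_f = t`
satisfies `winst f ≥ ⌊t/(n-2t)⌋ + ⌈t/(n-2t)⌉ + 1`. -/
theorem zigzag_winst (n t : ℕ) (hn : 0 < n) (hvalid : 2 * t + 1 ≤ n)
    (f : (Fin n → Bool) → Bool) (hf : tfEq f t) :
    t / (n - 2 * t) + (t + (n - 2 * t) - 1) / (n - 2 * t) + 1 ≤ winst t f :=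
  zigzag_winst_general n t hvalid f hf
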